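/- Let f be a smooth real-valued function on an open interval I ⊆ ℝ with f'' nowhere vanishing. On the open set Ω = {(x,z,p,r) ∈ ℝ⁴ : x ∈ I}, define H(x,z,p,r) = r f'''(x)/f''(x) (the right-hand side of the third-order ODE Y''' = Y'' f'''(X)/f''(X)). Then the Wünschmann expression of H satisfies, at every point of Ω: 9 D²H_r − 27 D H_p − 18 H_r · D H_r + 18 H_p H_r + 4 H_r³ + 54 H_z = (40 f'''(x)³ − 45 f''(x) f'''(x) f''''(x) + 9 f''(x)² f'''''(x)) / f''(x)³. -/

import Mathlib

/-!
For `H = r q(x)` one has `H_r = q`, `H_p = H_z = 0`, and `D` acts on functions of `x` alone as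
`d/dx`, so `W(H) = 9 q'' - 18 q q' + 4 q³`. Writing `s_k = f^(k+2) / f''`, so that `q = s_1`, the
quotient rule gives `s_k' = s_(k+1) - s_k s_1`, and substituting yields
`W(H) = 9 s_3 - 45 s_1 s_2 + 40 s_1³ = M(f) / f''³`.
-/

/-- Partial derivative of a function on `ℝ⁴` (coordinates `(x,z,p,r)` indexed `0,…,3`)
in the `i`-th coordinate direction. -/
noncomputable def pd4 (i : Fin 4) (F : (Fin 4 → ℝ) → ℝ) (v : Fin 4 → ℝ) : ℝ :=
  fderiv ℝ F v (Pi.single i 1)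

/-- The total derivative operator `D F = F_x + p F_z + r F_p + H F_r` on `ℝ⁴`. -/
noncomputable def Dop4 (H : (Fin 4 → ℝ) → ℝ) (F : (Fin 4 → ℝ) → ℝ) (v : Fin 4 → ℝ) : ℝ :=
  pd4 0 F v + v 2 * pd4 1 F v + v 3 * pd4 2 F v + H v * pd4 3 F v

/-- The Wünschmann expression
`W(H) = 9 D²H_r − 27 D H_p − 18 H_r D H_r + 18 H_p H_r + 4 H_r³ + 54 H_z`. -/
noncomputable def wunschmann (H : (Fin 4 → ℝ) → ℝ) (v : Fin 4 → ℝ) : ℝ :=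
  9 * Dop4 H (Dop4 H (pd4 3 H)) v - 27 * Dop4 H (pd4 2 H) v
    - 18 * pd4 3 H v * Dop4 H (pd4 3 H) v + 18 * pd4 2 H v * pd4 3 H v
    + 4 * (pd4 3 H v) ^ 3 + 54 * pd4 1 H v

/-- The Monge expression `M(f) = 40 f'''³ − 45 f'' f''' f'''' + 9 f''² f'''''`. -/
noncomputable def monge (f : ℝ → ℝ) (p : ℝ) : ℝ :=
  40 * (iteratedDeriv 3 f p) ^ 3
    - 45 * iteratedDeriv 2 f p * iteratedDeriv 3 f p * iteratedDeriv 4 f p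
    + 9 * (iteratedDeriv 2 f p) ^ 2 * iteratedDeriv 5 f p

section PartialDerivatives

variable {I : Set ℝ} {u : ℝ → ℝ} {u' : ℝ} {v : Fin 4 → ℝ}

lemma pd4_congr_of_eventuallyEq {F G : (Fin 4 → ℝ) → ℝ} (h : F =ᶠ[nhds v] G) (i : Fin 4) :
    pd4 i F v = pd4 i G v := by
  rw [pd4, pd4, h.fderiv_eq]

lemma hasFDerivAt_comp_apply_zero (hu : HasDerivAt u u' (v 0)) :
    HasFDerivAt (fun w : Fin 4 → ℝ => u (w 0))
      (u' • ContinuousLinearMap.proj (R := ℝ) (φ := fun _ : Fin 4 => ℝ) 0) v :=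
  hu.comp_hasFDerivAt v (hasFDerivAt_apply 0 v)

lemma pd4_comp_apply_zero (hu : HasDerivAt u u' (v 0)) (i : Fin 4) :
    pd4 i (fun w => u (w 0)) v = if i = 0 then u' else 0 := by
  rw [pd4, (hasFDerivAt_comp_apply_zero hu).fderiv]
  simp [Pi.single_apply, eq_comm]

lemma pd4_apply_three_mul_comp_apply_zero (hu : HasDerivAt u u' (v 0)) (i : Fin 4) :
    pd4 i (fun w => w 3 * u (w 0)) v =
      if i = 0 then v 3 * u' else if i = 3 then u (v 0) else 0 := by
  have h := (hasFDerivAt_apply 3 v).fun_mul (hasFDerivAt_comp_apply_zero hu)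
  rw [pd4, h.fderiv]
  fin_cases i <;> simp

lemma Dop4_eq_of_eqOn_comp_apply_zero (hI : IsOpen I) (H : (Fin 4 → ℝ) → ℝ)
    {F : (Fin 4 → ℝ) → ℝ} {u u' : ℝ → ℝ} (hF : ∀ w : Fin 4 → ℝ, w 0 ∈ I → F w = u (w 0))
    (hu : ∀ x ∈ I, HasDerivAt u (u' x) x) (hv : v 0 ∈ I) :
    Dop4 H F v = u' (v 0) := by
  have hslab : {w : Fin 4 → ℝ | w 0 ∈ I} ∈ nhds v :=
    (hI.preimage (continuous_apply 0)).mem_nhds hv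
  have hpd (i : Fin 4) : pd4 i F v = if i = 0 then u' (v 0) else 0 :=
    (pd4_congr_of_eventuallyEq (Filter.eventually_of_mem hslab hF) i).trans
      (pd4_comp_apply_zero (hu (v 0) hv) i)
  simp [Dop4, hpd]

end PartialDerivatives

theorem wunschmann_apply_three_mul_comp_apply_zero {I : Set ℝ} (hI : IsOpen I)
    {q q' q'' : ℝ → ℝ} (hq : ∀ x ∈ I, HasDerivAt q (q' x) x)
    (hq' : ∀ x ∈ I, HasDerivAt q' (q'' x) x) {v : Fin 4 → ℝ} (hv : v 0 ∈ I) :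
    wunschmann (fun w => w 3 * q (w 0)) v =
      9 * q'' (v 0) - 18 * q (v 0) * q' (v 0) + 4 * q (v 0) ^ 3 := by
  set H : (Fin 4 → ℝ) → ℝ := fun w => w 3 * q (w 0)
  have hpd {w : Fin 4 → ℝ} (hw : w 0 ∈ I) (i : Fin 4) :=
    pd4_apply_three_mul_comp_apply_zero (hq (w 0) hw) i
  have hHr {w : Fin 4 → ℝ} (hw : w 0 ∈ I) : pd4 3 H w = q (w 0) := by simp [H, hpd hw]
  have hHp {w : Fin 4 → ℝ} (hw : w 0 ∈ I) : pd4 2 H w = 0 := by simp [H, hpd hw]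
  have hHz : pd4 1 H v = 0 := by simp [H, hpd hv]
  have hDHr {w : Fin 4 → ℝ} (hw : w 0 ∈ I) : Dop4 H (pd4 3 H) w = q' (w 0) :=
    Dop4_eq_of_eqOn_comp_apply_zero hI H (fun _ => hHr) hq hw
  have hD2Hr : Dop4 H (Dop4 H (pd4 3 H)) v = q'' (v 0) :=
    Dop4_eq_of_eqOn_comp_apply_zero hI H (fun _ => hDHr) hq' hv
  have hDHp : Dop4 H (pd4 2 H) v = 0 :=
    Dop4_eq_of_eqOn_comp_apply_zero hI H (u := fun _ => 0) (fun _ => hHp)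
      (fun x _ => hasDerivAt_const x 0) hv
  rw [wunschmann, hD2Hr, hDHp, hHr hv, hDHr hv, hHp hv, hHz]
  ring

theorem hasDerivAt_iteratedDeriv_of_contDiffOn {𝕜 F : Type*} [NontriviallyNormedField 𝕜]
    [NormedAddCommGroup F] [NormedSpace 𝕜 F] {I : Set 𝕜} (hI : IsOpen I) {N : WithTop ℕ∞}
    {f : 𝕜 → F} (hf : ContDiffOn 𝕜 N f I) {n : ℕ} (hn : n < N) {x : 𝕜} (hx : x ∈ I) :
    HasDerivAt (iteratedDeriv n f) (iteratedDeriv (n + 1) f x) x := by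
  have hdiff : DifferentiableOn 𝕜 (iteratedDeriv n f) I :=
    (hf.differentiableOn_iteratedDerivWithin hn hI.uniqueDiffOn).congr
      fun _ hy => (iteratedDerivWithin_of_isOpen hI hy).symm
  rw [iteratedDeriv_succ]
  exact ((hdiff x hx).differentiableAt (hI.mem_nhds hx)).hasDerivAt

noncomputable def iteratedDerivRatio (f : ℝ → ℝ) (n : ℕ) (x : ℝ) : ℝ :=
  iteratedDeriv (n + 2) f x / iteratedDeriv 2 f x

theorem hasDerivAt_iteratedDerivRatio {I : Set ℝ} (hI : IsOpen I) {N : WithTop ℕ∞}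
    {f : ℝ → ℝ} (hf : ContDiffOn ℝ N f I) (hnd : ∀ x ∈ I, iteratedDeriv 2 f x ≠ 0)
    {n : ℕ} (hn : n + 2 < N) {x : ℝ} (hx : x ∈ I) :
    HasDerivAt (iteratedDerivRatio f n)
      (iteratedDerivRatio f (n + 1) x - iteratedDerivRatio f n x * iteratedDerivRatio f 1 x) x := by
  have h2 : ((2 : ℕ) : WithTop ℕ∞) < N := lt_of_le_of_lt (by exact_mod_cast le_add_self) hn
  have h := (hasDerivAt_iteratedDeriv_of_contDiffOn hI hf (n := n + 2) (by exact_mod_cast hn)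
    hx).div (hasDerivAt_iteratedDeriv_of_contDiffOn hI hf h2 hx) (hnd x hx)
  refine h.congr_deriv ?_
  have hne := hnd x hx
  simp only [iteratedDerivRatio]
  field_simp

theorem monge_div_iteratedDeriv_two_pow_three {f : ℝ → ℝ} {x : ℝ}
    (hx : iteratedDeriv 2 f x ≠ 0) :
    monge f x / iteratedDeriv 2 f x ^ 3 =
      9 * iteratedDerivRatio f 3 x - 45 * iteratedDerivRatio f 1 x * iteratedDerivRatio f 2 x
        + 40 * iteratedDerivRatio f 1 x ^ 3 := by
  simp only [monge, iteratedDerivRatio]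
  field_simp
  ring

theorem wunschmann_of_ODE_eq_monge_general
    (I : Set ℝ) (hI : IsOpen I)
    (f : ℝ → ℝ) (hf : ContDiffOn ℝ (⊤ : ℕ∞) f I)
    (hnd : ∀ x ∈ I, iteratedDeriv 2 f x ≠ 0) :
    ∀ v : Fin 4 → ℝ, v 0 ∈ I →
      wunschmann (fun v => v 3 * iteratedDeriv 3 f (v 0) / iteratedDeriv 2 f (v 0)) v =
      monge f (v 0) / (iteratedDeriv 2 f (v 0)) ^ 3 := by
  intro v hv
  set s := iteratedDerivRatio f
  have hs (n : ℕ) {x : ℝ} (hx : x ∈ I) : HasDerivAt (s n) (s (n + 1) x - s n x * s 1 x) x :=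
    hasDerivAt_iteratedDerivRatio hI hf hnd
      (WithTop.coe_lt_coe.mpr (ENat.natCast_lt_top (n + 2))) hx
  have hs1 {x : ℝ} (hx : x ∈ I) : HasDerivAt (s 1) (s 2 x - s 1 x ^ 2) x :=
    (hs 1 hx).congr_deriv (by ring)
  have hs1' {x : ℝ} (hx : x ∈ I) : HasDerivAt (fun y => s 2 y - s 1 y ^ 2)
      (s 3 x - s 2 x * s 1 x - 2 * s 1 x * (s 2 x - s 1 x ^ 2)) x :=
    ((hs 2 hx).sub ((hs1 hx).pow 2)).congr_deriv (by ring)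
  have hH : (fun w : Fin 4 → ℝ => w 3 * iteratedDeriv 3 f (w 0) / iteratedDeriv 2 f (w 0)) =
      fun w => w 3 * s 1 (w 0) := by
    simp only [s, iteratedDerivRatio, mul_div_assoc]
  rw [hH, wunschmann_apply_three_mul_comp_apply_zero hI (fun _ => hs1) (fun _ => hs1') hv,
    monge_div_iteratedDeriv_two_pow_three (hnd _ hv)]
  ring

/-- For the third-order ODE `Y''' = Y'' f'''(X)/f''(X)`, i.e.
`H(x,z,p,r) = r f'''(x)/f''(x)` (with `f''` nonvanishing), the Wünschmann expression of `H`
equals `M(f)(x)/f''(x)³` at every point of `Ω = {(x,z,p,r) : x ∈ I}`. -/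
theorem wunschmann_of_ODE_eq_monge
    (I : Set ℝ) (hI : IsOpen I) (hI' : Convex ℝ I)
    (f : ℝ → ℝ) (hf : ContDiffOn ℝ (⊤ : ℕ∞) f I)
    (hnd : ∀ x ∈ I, iteratedDeriv 2 f x ≠ 0) :
    ∀ v : Fin 4 → ℝ, v 0 ∈ I →
      wunschmann (fun v => v 3 * iteratedDeriv 3 f (v 0) / iteratedDeriv 2 f (v 0)) v =
      monge f (v 0) / (iteratedDeriv 2 f (v 0)) ^ 3 :=
  wunschmann_of_ODE_eq_monge_general I hI f hf hnd
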